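/- Equivalence between sums of distinct elements: let U₁,…,Uₙ be pairwise non-equivalent unit types and V₁,…,Vₘ be pairwise non-equivalent unit types. If Σᵢ₌₁ⁿ αᵢ·Uᵢ ≡ Σⱼ₌₁ᵐ βⱼ·Vⱼ, then m = n and there exists a permutation p of {1,…,n} such that for all i, αᵢ = β_{p(i)} and Uᵢ ≡ V_{p(i)}. -/

import Mathlib

/- Types of λvec_R: general types and unit types (mutual) -/
mutual
inductive UTy (S : Type) : Type where
  | uvar : ℕ → UTy S
  | arrow : UTy S → Ty S → UTy S
  | fallU : ℕ → UTy S → UTy S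
  | fallG : ℕ → UTy S → UTy S
inductive Ty (S : Type) : Type where
  | unit : UTy S → Ty S
  | smul : S → Ty S → Ty S
  | add : Ty S → Ty S → Ty S
  | gvar : ℕ → Ty S
end

/- Type equivalence: the smallest congruence with the weak-module axioms -/
mutual
inductive UEquiv {S : Type} [CommRing S] : UTy S → UTy S → Prop where
  | refl (U : UTy S) : UEquiv U U
  | symm : UEquiv U V → UEquiv V U
  | trans : UEquiv U V → UEquiv V W → UEquiv U W
  | arrow : UEquiv U V → TEquiv T R → UEquiv (.arrow U T) (.arrow V R)
  | fallU : UEquiv U V → UEquiv (.fallU X U) (.fallU X V)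
  | fallG : UEquiv U V → UEquiv (.fallG X U) (.fallG X V)
inductive TEquiv {S : Type} [CommRing S] : Ty S → Ty S → Prop where
  | refl (T : Ty S) : TEquiv T T
  | symm : TEquiv T R → TEquiv R T
  | trans : TEquiv T R → TEquiv R P → TEquiv T P
  | unit : UEquiv U V → TEquiv (.unit U) (.unit V)
  | smul : TEquiv T R → TEquiv (.smul a T) (.smul a R)
  | addL : TEquiv T R → TEquiv (.add T P) (.add R P)
  | addR : TEquiv T R → TEquiv (.add P T) (.add P R)
  | one_smul (T : Ty S) : TEquiv (.smul 1 T) T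
  | smul_smul : TEquiv (.smul a (.smul b T)) (.smul (a*b) T)
  | smul_add : TEquiv (.add (.smul a T) (.smul a R)) (.smul a (.add T R))
  | add_smul : TEquiv (.add (.smul a T) (.smul b T)) (.smul (a+b) T)
  | comm : TEquiv (.add T R) (.add R T)
  | assoc : TEquiv (.add T (.add R P)) (.add (.add T R) P)
end

/- substitution of a unit type variable by a unit type -/
mutual
def UTy.substU {S : Type} : UTy S → ℕ → UTy S → UTy S
  | .uvar m, X, A => if m = X then A else .uvar m
  | .arrow U T, X, A => .arrow (U.substU X A) (T.substU X A)
  | .fallU m U, X, A => if m = X then .fallU m U else .fallU m (U.substU X A)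
  | .fallG m U, X, A => .fallG m (U.substU X A)
def Ty.substU {S : Type} : Ty S → ℕ → UTy S → Ty S
  | .unit U, X, A => .unit (U.substU X A)
  | .smul a T, X, A => .smul a (T.substU X A)
  | .add T R, X, A => .add (T.substU X A) (R.substU X A)
  | .gvar m, _, _ => .gvar m
end

/- substitution of a general type variable by a general type -/
mutual
def UTy.substG {S : Type} : UTy S → ℕ → Ty S → UTy S
  | .uvar m, _, _ => .uvar m
  | .arrow U T, X, A => .arrow (U.substG X A) (T.substG X A)
  | .fallU m U, X, A => .fallU m (U.substG X A)
  | .fallG m U, X, A => if m = X then .fallG m U else .fallG m (U.substG X A)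
def Ty.substG {S : Type} : Ty S → ℕ → Ty S → Ty S
  | .unit U, X, A => .unit (U.substG X A)
  | .smul a T, X, A => .smul a (T.substG X A)
  | .add T R, X, A => .add (T.substG X A) (R.substG X A)
  | .gvar m, X, A => if m = X then A else .gvar m
end

/- free type variables; a variable is (false, n) for a unit variable X_n
   and (true, n) for a general variable 𝕏_n -/
mutual
def UTy.fv {S : Type} : UTy S → Set (Bool × ℕ)
  | .uvar n => {(false, n)}
  | .arrow U T => U.fv ∪ T.fv
  | .fallU n U => U.fv \ {(false, n)}
  | .fallG n U => U.fv \ {(true, n)}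
def Ty.fv {S : Type} : Ty S → Set (Bool × ℕ)
  | .unit U => U.fv
  | .smul _ T => T.fv
  | .add T R => T.fv ∪ R.fv
  | .gvar n => {(true, n)}
end
/- a single substitution item: a type variable together with a type of the matching kind -/
inductive TSub (S : Type) : Type where
  | u : ℕ → UTy S → TSub S
  | g : ℕ → Ty S → TSub S

def TSub.var {S : Type} : TSub S → Bool × ℕ
  | .u X _ => (false, X)
  | .g X _ => (true, X)

def Ty.applySub {S : Type} : Ty S → TSub S → Ty S
  | T, .u X A => T.substU X A
  | T, .g X A => T.substG X A

def UTy.applySub {S : Type} : UTy S → TSub S → UTy S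
  | U, .u X A => U.substU X A
  | U, .g X A => U.substG X A

def Ty.applySubs {S : Type} (T : Ty S) (σ : List (TSub S)) : Ty S := σ.foldl Ty.applySub T
def UTy.applySubs {S : Type} (U : UTy S) (σ : List (TSub S)) : UTy S := σ.foldl UTy.applySub U

/- ∀X.U for a variable of either kind, and iterated foralls -/
def mkForall {S : Type} (X : Bool × ℕ) (U : UTy S) : UTy S :=
  if X.1 then .fallG X.2 U else .fallU X.2 U
def mkForalls {S : Type} (Xs : List (Bool × ℕ)) (U : UTy S) : UTy S := Xs.foldr mkForall U

/- the linear combination Σᵢ αᵢ·Tᵢ represented by a (nonempty) list of pairs -/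
def combo {S : Type} : List (S × Ty S) → Ty S
  | [] => .gvar 0
  | [p] => .smul p.1 p.2
  | p :: q :: L => .add (.smul p.1 p.2) (combo (q :: L))

/- sum of the scalars of a linear combination -/
def weightOf {S : Type} [CommRing S] {α : Type} (L : List (S × α)) : S := (L.map Prod.fst).sum

/- Terms of λvec_R -/
inductive Term (S : Type) : Type where
  | var : ℕ → Term S
  | lam : ℕ → Term S → Term S
  | app : Term S → Term S → Term S
  | smul : S → Term S → Term S
  | add : Term S → Term S → Term S

/- basis terms: variables and abstractions -/
inductive IsBasis {S : Type} : Term S → Prop where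
  | var : IsBasis (.var x)
  | lam : IsBasis (.lam x t)

def Term.fv {S : Type} : Term S → Set ℕ
  | .var x => {x}
  | .lam x t => t.fv \ {x}
  | .app t r => t.fv ∪ r.fv
  | .smul _ t => t.fv
  | .add t r => t.fv ∪ r.fv

/- term substitution t[b/x] -/
def Term.subst {S : Type} : Term S → ℕ → Term S → Term S
  | .var y, x, b => if y = x then b else .var y
  | .lam y t, x, b => if y = x then .lam y t else .lam y (t.subst x b)
  | .app t r, x, b => .app (t.subst x b) (r.subst x b)
  | .smul a t, x, b => .smul a (t.subst x b)
  | .add t r, x, b => .add (t.subst x b) (r.subst x b)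

/- typing contexts: partial maps from term variables to unit types -/
def Ctx (S : Type) : Type := ℕ → Option (UTy S)

def Ctx.update {S : Type} (Γ : Ctx S) (x : ℕ) (U : UTy S) : Ctx S :=
  fun y => if y = x then some U else Γ y

def Ctx.fv {S : Type} (Γ : Ctx S) : Set (Bool × ℕ) :=
  {v | ∃ x U, Γ x = some U ∧ v ∈ UTy.fv U}

def Ctx.applySub {S : Type} (Γ : Ctx S) (s : TSub S) : Ctx S :=
  fun x => (Γ x).map (fun U => U.applySub s)
/- Sized typing judgement: `TypesN n Γ t T` means Γ ⊢ t : T has a derivation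
   with n sequents. -/
inductive TypesN {S : Type} [CommRing S] : ℕ → Ctx S → Term S → Ty S → Prop where
  | ax : Γ x = some U → TypesN 1 Γ (.var x) (.unit U)
  | equiv : TypesN n Γ t T → TEquiv T R → TypesN (n+1) Γ t R
  | arrI : TypesN n (Γ.update x U) t T → TypesN (n+1) Γ (.lam x t) (.unit (.arrow U T))
  | arrE (Xs : List (Bool × ℕ)) (U : UTy S) (L : List (S × Ty S)) (M : List (S × List (TSub S))) :
      L ≠ [] → M ≠ [] →
      (∀ q ∈ M, q.2.map TSub.var = Xs) →
      TypesN n Γ t (combo (L.map fun p => (p.1, Ty.unit (mkForalls Xs (.arrow U p.2))))) →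
      TypesN m Γ r (combo (M.map fun q => (q.1, (Ty.unit U).applySubs q.2))) →
      TypesN (n+m+1) Γ (.app t r)
        (combo (L.flatMap fun p => M.map fun q => (p.1 * q.1, p.2.applySubs q.2)))
  | fallI (L : List (S × UTy S)) (X : Bool × ℕ) :
      L ≠ [] → X ∉ Γ.fv →
      TypesN n Γ t (combo (L.map fun p => (p.1, Ty.unit p.2))) →
      TypesN (n+1) Γ t (combo (L.map fun p => (p.1, Ty.unit (mkForall X p.2))))
  | fallE (L : List (S × UTy S)) (s : TSub S) :
      L ≠ [] →
      TypesN n Γ t (combo (L.map fun p => (p.1, Ty.unit (mkForall s.var p.2)))) →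
      TypesN (n+1) Γ t (combo (L.map fun p => (p.1, (Ty.unit p.2).applySub s)))
  | addI : TypesN n Γ t T → TypesN m Γ r R → TypesN (n+m+1) Γ (.add t r) (.add T R)
  | oneE : TypesN n Γ (.smul 1 t) T → TypesN (n+1) Γ t T
  | sum (L : List (ℕ × S × Ty S)) :
      L ≠ [] →
      (∀ p ∈ L, TypesN p.1 Γ t p.2.2) →
      TypesN ((L.map Prod.fst).sum + 1) Γ (.smul (weightOf (L.map Prod.snd)) t)
        (combo (L.map Prod.snd))

/- the typing judgement Γ ⊢ t : T -/
def Types {S : Type} [CommRing S] (Γ : Ctx S) (t : Term S) (T : Ty S) : Prop :=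
  ∃ n, TypesN n Γ t T

/- the relation ≺_{X,Γ} -/
inductive Prec {S : Type} [CommRing S] (Γ : Ctx S) : (Bool × ℕ) → Ty S → Ty S → Prop where
  | intro (X : Bool × ℕ) (L : List (S × UTy S)) :
      X ∉ Γ.fv → L ≠ [] →
      TEquiv R (combo (L.map fun p => (p.1, Ty.unit p.2))) →
      TEquiv T (combo (L.map fun p => (p.1, Ty.unit (mkForall X p.2)))) →
      Prec Γ X R T
  | elim (s : TSub S) (L : List (S × UTy S)) :
      s.var ∉ Γ.fv → L ≠ [] →
      TEquiv R (combo (L.map fun p => (p.1, Ty.unit (mkForall s.var p.2)))) →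
      TEquiv T (combo (L.map fun p => (p.1, (Ty.unit p.2).applySub s))) →
      Prec Γ s.var R T

/- the relation ⪯_{𝒱,Γ} -/
inductive Preceq {S : Type} [CommRing S] (Γ : Ctx S) : Set (Bool × ℕ) → Ty S → Ty S → Prop where
  | prec : V ∩ Γ.fv = ∅ → Prec Γ X R T → Preceq Γ (V ∪ {X}) R T
  | trans : Preceq Γ V₁ A B → Preceq Γ V₂ B C → Preceq Γ (V₁ ∪ V₂) A C
  | equiv : V ∩ Γ.fv = ∅ → TEquiv R T → Preceq Γ V R T

/- the reduction relation → -/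
inductive Step {S : Type} [CommRing S] : Term S → Term S → Prop where
  -- Group E
  | oneSmul : Step (.smul 1 t) t
  | smulSmul : Step (.smul a (.smul b t)) (.smul (a*b) t)
  | smulAdd : Step (.smul a (.add t r)) (.add (.smul a t) (.smul a r))
  -- Group F
  | factor : Step (.add (.smul a t) (.smul b t)) (.smul (a+b) t)
  | factorOne : Step (.add (.smul a t) t) (.smul (a+1) t)
  | factorNone : Step (.add t t) (.smul (1+1) t)
  -- Group B
  | beta : IsBasis b → Step (.app (.lam x t) b) (t.subst x b)
  -- Group A
  | appAddL : Step (.app (.add t r) u) (.add (.app t u) (.app r u))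
  | appAddR : Step (.app t (.add r u)) (.add (.app t r) (.app t u))
  | appSmulL : Step (.app (.smul a t) r) (.smul a (.app t r))
  | appSmulR : Step (.app t (.smul a r)) (.smul a (.app t r))
  -- contextual rules
  | ctxSmul : Step t r → Step (.smul a t) (.smul a r)
  | ctxAddR : Step t r → Step (.add u t) (.add u r)
  | ctxAppR : Step t r → Step (.app u t) (.app u r)
  | ctxAppL : Step t r → Step (.app t u) (.app r u)
  | ctxLam : Step t r → Step (.lam x t) (.lam x r)

/- values: sums (in any association) of pairwise-distinct abstractions, possibly scaled -/
inductive SumOf {S : Type} : Term S → List (Term S) → Prop where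
  | leaf (t : Term S) : SumOf t [t]
  | add : SumOf t L → SumOf r M → SumOf (.add t r) (L ++ M)

inductive VEntry {S : Type} : Term S → Prop where
  | lam : VEntry (.lam x t)
  | smul : VEntry (.smul a (.lam x t))

def lamOf {S : Type} : Term S → Term S
  | .smul _ b => b
  | b => b

def IsValue {S : Type} (t : Term S) : Prop :=
  ∃ L : List (Term S), SumOf t L ∧ (∀ e ∈ L, VEntry e) ∧ (L.map lamOf).Pairwise (· ≠ ·)

/- weight of types and of terms -/
def Ty.weight {S : Type} [CommRing S] : Ty S → S
  | .unit _ => 1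
  | .gvar _ => 1
  | .smul a T => a * T.weight
  | .add T R => T.weight + R.weight

def Term.weight {S : Type} [CommRing S] : Term S → S
  | .var _ => 1
  | .lam _ _ => 1
  | .app _ _ => 1
  | .smul a t => a * t.weight
  | .add t r => t.weight + r.weight

/-!
A type determines two invariants of `≡`: for each unit type `V`, the total coefficient of the
unit summands equivalent to `V`, and the set of unit types equivalent to some unit summand.
Every axiom of `≡` preserves both (by a ring identity, resp. a set identity). For a sum of
pairwise non-equivalent unit types, the coefficient of the class of `Uᵢ` is exactly `αᵢ`, and the
support identifies the summands up to `≡`. The support is needed on top of the coefficients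
because some `αᵢ` may be `0`.
-/

section

variable {S : Type} [CommRing S]

open Classical in
noncomputable def Ty.coeff : Ty S → UTy S → S
  | .unit U, V => if UEquiv U V then 1 else 0
  | .smul a T, V => a * T.coeff V
  | .add T R, V => T.coeff V + R.coeff V
  | .gvar _, _ => 0

def Ty.support : Ty S → Set (UTy S)
  | .unit U => {V | UEquiv U V}
  | .smul _ T => T.support
  | .add T R => T.support ∪ R.support
  | .gvar _ => ∅

theorem TEquiv.coeff_eq {T R : Ty S} :
    TEquiv T R → ∀ V, T.coeff V = R.coeff V
  | .refl _, _ => rfl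
  | .symm h, V => (h.coeff_eq V).symm
  | .trans h h', V => (h.coeff_eq V).trans (h'.coeff_eq V)
  | .unit h, V => by
    simp only [Ty.coeff]
    congr 1
    exact propext ⟨h.symm.trans, h.trans⟩
  | .smul h, V => by simp only [Ty.coeff, h.coeff_eq V]
  | .addL h, V => by simp only [Ty.coeff, h.coeff_eq V]
  | .addR h, V => by simp only [Ty.coeff, h.coeff_eq V]
  | .one_smul _, _ => one_mul _
  | .smul_smul, _ => (mul_assoc _ _ _).symm
  | .smul_add, _ => (mul_add _ _ _).symm
  | .add_smul, _ => (add_mul _ _ _).symm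
  | .comm, _ => add_comm _ _
  | .assoc, _ => (add_assoc _ _ _).symm

theorem TEquiv.support_eq {T R : Ty S} :
    TEquiv T R → T.support = R.support
  | .refl _ => rfl
  | .symm h => h.support_eq.symm
  | .trans h h' => h.support_eq.trans h'.support_eq
  | .unit h => Set.ext fun _ => ⟨h.symm.trans, h.trans⟩
  | .smul h => h.support_eq
  | .addL h => congrArg (· ∪ _) h.support_eq
  | .addR h => congrArg (_ ∪ ·) h.support_eq
  | .one_smul _ => rfl
  | .smul_smul => rfl
  | .smul_add => rfl
  | .add_smul => Set.union_self _
  | .comm => Set.union_comm _ _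
  | .assoc => (Set.union_assoc _ _ _).symm

open Classical in
theorem coeff_combo_unit (L : List (S × UTy S)) (V : UTy S) :
    (combo (L.map fun p => (p.1, Ty.unit p.2))).coeff V
      = (L.map fun p => if UEquiv p.2 V then p.1 else 0).sum := by
  match L with
  | [] => rfl
  | [p] => simp [combo, Ty.coeff]
  | p :: q :: L =>
    have ih := coeff_combo_unit (q :: L) V
    simp only [List.map_cons, combo, Ty.coeff, List.sum_cons, mul_ite, mul_one, mul_zero] at ih ⊢
    rw [ih]

theorem support_combo_unit (L : List (S × UTy S)) :
    (combo (L.map fun p => (p.1, Ty.unit p.2))).support = {V | ∃ p ∈ L, UEquiv p.2 V} := by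
  match L with
  | [] => simp [combo, Ty.support]
  | [p] => simp [combo, Ty.support]
  | p :: q :: L =>
    have ih := support_combo_unit (q :: L)
    simp only [List.map_cons, combo, Ty.support] at ih ⊢
    rw [ih]
    ext V
    simp

open Classical in
theorem sum_ite_uequiv_of_pairwise {L : List (S × UTy S)}
    (hL : (L.map Prod.snd).Pairwise (fun U V => ¬ UEquiv U V))
    {p : S × UTy S} (hp : p ∈ L) {V : UTy S} (hV : UEquiv p.2 V) :
    (L.map fun q => if UEquiv q.2 V then q.1 else 0).sum = p.1 := by
  induction L with
  | nil => cases hp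
  | cons a L ih =>
    rw [List.map_cons, List.pairwise_cons, List.forall_mem_map] at hL
    rw [List.map_cons, List.sum_cons]
    rcases List.mem_cons.mp hp with rfl | hp
    · rw [if_pos hV, add_eq_left]
      refine List.sum_eq_zero fun x hx => ?_
      obtain ⟨q, hq, rfl⟩ := List.mem_map.mp hx
      exact if_neg fun hqV => hL.1 q hq (hV.trans hqV.symm)
    · rw [if_neg fun haV => hL.1 p hp (haV.trans hV.symm), zero_add]
      exact ih hL.2 hp

theorem eq_of_uequiv_get_of_pairwise {L : List (S × UTy S)}
    (hL : (L.map Prod.snd).Pairwise (fun U V => ¬ UEquiv U V))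
    {i j : Fin L.length} (h : UEquiv (L.get i).2 (L.get j).2) : i = j := by
  have hL' := List.pairwise_map.mp hL
  rcases lt_trichotomy i j with hij | hij | hij
  · exact absurd h (hL'.rel_get_of_lt hij)
  · exact hij
  · exact absurd h.symm (hL'.rel_get_of_lt hij)

theorem exists_uequiv_get_of_subset {L M : List (S × UTy S)}
    (h : {V | ∃ p ∈ L, UEquiv p.2 V} ⊆ {V | ∃ p ∈ M, UEquiv p.2 V}) (i : Fin L.length) :
    ∃ j : Fin M.length, UEquiv (L.get i).2 (M.get j).2 := by
  obtain ⟨q, hq, hqV⟩ := h ⟨L.get i, L.get_mem i, UEquiv.refl _⟩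
  obtain ⟨j, rfl⟩ := List.mem_iff_get.mp hq
  exact ⟨j, hqV.symm⟩

theorem exists_equiv_uequiv_get_of_pairwise {L M : List (S × UTy S)}
    (hL : (L.map Prod.snd).Pairwise (fun U V => ¬ UEquiv U V))
    (hM : (M.map Prod.snd).Pairwise (fun U V => ¬ UEquiv U V))
    (h : {V | ∃ p ∈ L, UEquiv p.2 V} = {V | ∃ p ∈ M, UEquiv p.2 V}) :
    ∃ σ : Fin L.length ≃ Fin M.length, ∀ i, UEquiv (L.get i).2 (M.get (σ i)).2 := by
  choose f hf using exists_uequiv_get_of_subset h.le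
  choose g hg using exists_uequiv_get_of_subset h.ge
  refine ⟨⟨f, g, fun i => ?_, fun j => ?_⟩, hf⟩
  · exact (eq_of_uequiv_get_of_pairwise hL ((hf i).trans (hg (f i)))).symm
  · exact (eq_of_uequiv_get_of_pairwise hM ((hg j).trans (hf (g j)))).symm

end

theorem equiv_sums_of_distinct_elements {S : Type} [CommRing S]
    (L M : List (S × UTy S)) (hL : L ≠ []) (hM : M ≠ [])
    (hLd : (L.map Prod.snd).Pairwise (fun U V => ¬ UEquiv U V))
    (hMd : (M.map Prod.snd).Pairwise (fun U V => ¬ UEquiv U V))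
    (h : TEquiv (combo (L.map fun p => (p.1, Ty.unit p.2)))
                (combo (M.map fun p => (p.1, Ty.unit p.2)))) :
    M.length = L.length ∧
    ∃ σ : Fin L.length ≃ Fin M.length,
      ∀ i : Fin L.length,
        (L.get i).1 = (M.get (σ i)).1 ∧ UEquiv (L.get i).2 (M.get (σ i)).2 := by
  have hsupport := h.support_eq
  rw [support_combo_unit, support_combo_unit] at hsupport
  obtain ⟨σ, hσ⟩ := exists_equiv_uequiv_get_of_pairwise hLd hMd hsupport
  refine ⟨(Fin.equiv_iff_eq.mp ⟨σ⟩).symm, σ, fun i => ⟨?_, hσ i⟩⟩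
  have hcoeff := h.coeff_eq (L.get i).2
  rwa [coeff_combo_unit, coeff_combo_unit,
    sum_ite_uequiv_of_pairwise hLd (L.get_mem i) (UEquiv.refl _),
    sum_ite_uequiv_of_pairwise hMd (M.get_mem (σ i)) (hσ i).symm] at hcoeff
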